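/- Let p_i, p_T, v_i, v_T, w ∈ ℝ³ with r := ‖p_T − p_i‖ > 0 and g = (p_T − p_i)/r. Let g̃ ∈ ℝ³ be any unit vector, set μ = g̃ − g, ν_r = μᵀ(p_T − p_i), Σ_P = g̃g̃ᵀ − ggᵀ, and let the noisy bearing rate be h̃ = P_g(v_T − v_i)/r + P_g w, where P_u = I₃ − u uᵀ. Then the pseudo-linear bearing-rate measurement equation holds exactly: −h̃ g̃ᵀ p_i + P_{g̃} v_i = −h̃ g̃ᵀ p_T + P_{g̃} v_T + ν_h, where ν_h = r P_g w + h̃ ν_r + Σ_P (v_T − v_i). -/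
import Mathlib


open Matrix

/-- The orthogonal projection matrix `P_u = I₃ − u uᵀ` associated with `u ∈ ℝ³`. -/
noncomputable def projMat (u : Fin 3 → ℝ) : Matrix (Fin 3) (Fin 3) ℝ :=
  (1 : Matrix (Fin 3) (Fin 3) ℝ) - vecMulVec u u

lemma vecMulVec_mulVec' (u v x : Fin 3 → ℝ) :
    vecMulVec u v *ᵥ x = (v ⬝ᵥ x) • u := by
  ext i
  simp only [vecMulVec, mulVec, dotProduct, Pi.smul_apply, smul_eq_mul, Matrix.of_apply]
  rw [Finset.sum_mul]
  exact Finset.sum_congr rfl (by intros; ring)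

lemma projMat_mulVec (u x : Fin 3 → ℝ) :
    projMat u *ᵥ x = x - (u ⬝ᵥ x) • u := by
  rw [projMat, Matrix.sub_mulVec, Matrix.one_mulVec, vecMulVec_mulVec']

/-- Pseudo-linear bearing-rate measurement equation. Let `p_T, v_T` (target) and
`p_i, v_i` (observer) be positions and velocities in `ℝ³`, with Euclidean range
`r = ‖p_T − p_i‖ > 0` and true unit bearing `g = (p_T − p_i)/r`. Let `g̃` be any
unit vector (the noisy bearing measurement), `μ = g̃ − g`, `ν_r = μᵀ(p_T − p_i)`,
`Σ_P = g̃ g̃ᵀ − g gᵀ`, and let the noisy bearing rate be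
`h̃ = P_g(v_T − v_i)/r + P_g w`. Then
`−h̃ g̃ᵀ p_i + P_{g̃} v_i = −h̃ g̃ᵀ p_T + P_{g̃} v_T + ν_h` holds exactly, where
`ν_h = r P_g w + h̃ ν_r + Σ_P (v_T − v_i)`. -/
theorem pseudo_linear_bearing_rate (pT pi vT vi w g g' μ h' : Fin 3 → ℝ)
    (r νr : ℝ) (SP : Matrix (Fin 3) (Fin 3) ℝ)
    (hr : r = Real.sqrt ((pT - pi) ⬝ᵥ (pT - pi))) (hr0 : 0 < r)
    (hg : g = r⁻¹ • (pT - pi))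
    (hg' : g' ⬝ᵥ g' = 1) (hμ : μ = g' - g)
    (hνr : νr = μ ⬝ᵥ (pT - pi))
    (hSP : SP = vecMulVec g' g' - vecMulVec g g)
    (hh' : h' = r⁻¹ • (projMat g *ᵥ (vT - vi)) + projMat g *ᵥ w) :
    -(vecMulVec h' g' *ᵥ pi) + projMat g' *ᵥ vi =
      -(vecMulVec h' g' *ᵥ pT) + projMat g' *ᵥ vT +
        (r • (projMat g *ᵥ w) + νr • h' + SP *ᵥ (vT - vi)) := by
  have hss : (pT - pi) ⬝ᵥ (pT - pi) = r ^ 2 := by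
    have hnn : 0 ≤ (pT - pi) ⬝ᵥ (pT - pi) :=
      Finset.sum_nonneg fun j _ => mul_self_nonneg _
    rw [hr, Real.sq_sqrt hnn]
  have hrne : r ≠ 0 := ne_of_gt hr0
  have hgs : g ⬝ᵥ (pT - pi) = r := by
    rw [hg, smul_dotProduct, smul_eq_mul, hss]
    field_simp
  have h1 : g' ⬝ᵥ pT = g' ⬝ᵥ pi + r + νr := by
    have h2 : g' ⬝ᵥ (pT - pi) = r + νr := by
      rw [hνr, hμ, sub_dotProduct, hgs]; ring
    rw [dotProduct_sub] at h2
    linarith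
  have key : r • h' = (vT - vi) - (g ⬝ᵥ (vT - vi)) • g
      + (r • w - (r * (g ⬝ᵥ w)) • g) := by
    rw [hh', projMat_mulVec, projMat_mulVec, smul_add, smul_smul,
      mul_inv_cancel₀ hrne, one_smul, smul_sub, smul_smul]
  subst hSP
  rw [Matrix.sub_mulVec]
  simp only [projMat_mulVec, vecMulVec_mulVec', h1]
  rw [show (g' ⬝ᵥ pi + r + νr) • h' = (g' ⬝ᵥ pi) • h' + r • h' + νr • h' by
    rw [add_smul, add_smul], key]
  simp only [dotProduct_sub]
  module
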